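/- Suppose a₁=2. If s>2 and (1,s−1),(1,p−1)∈∂̃(Γ), then p^{(1,s−1)}_{(1,p−1),(p−1,1)}=0. -/

import Mathlib

namespace Paper

/-- A digraph: a set of vertices together with a set of arcs (ordered pairs of
distinct vertices). -/
structure Digraph (V : Type*) where
  Adj : V → V → Prop
  loopless : ∀ v : V, ¬ Adj v v

variable {V V' : Type*}

namespace Digraph

/-- There is a directed walk of length `n` from `x` to `y`. -/
def HasPath (G : Digraph V) (x y : V) (n : ℕ) : Prop :=
  ∃ f : ℕ → V, f 0 = x ∧ f n = y ∧ ∀ k < n, G.Adj (f k) (f (k + 1))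

/-- The distance `∂(x,y)`: the length of a shortest directed path from `x` to `y`. -/
noncomputable def dist (G : Digraph V) (x y : V) : ℕ :=
  sInf {n | G.HasPath x y n}

/-- The two-way distance `∂̃(x,y) = (∂(x,y), ∂(y,x))`. -/
noncomputable def tdist (G : Digraph V) (x y : V) : ℕ × ℕ :=
  (G.dist x y, G.dist y x)

/-- The two-way distance set `∂̃(Γ)`. -/
def tdSet (G : Digraph V) : Set (ℕ × ℕ) :=
  {p | ∃ x y : V, G.tdist x y = p}

def StronglyConnected (G : Digraph V) : Prop :=
  ∀ x y : V, ∃ n, G.HasPath x y n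

/-- `P_{ĩ,j̃}(x,y)`: the set of `z` with `∂̃(x,z) = ĩ` and `∂̃(z,y) = j̃`. -/
def P (G : Digraph V) (i j : ℕ × ℕ) (x y : V) : Set V :=
  {z | G.tdist x z = i ∧ G.tdist z y = j}

open Classical in
/-- The intersection number `p^{h̃}_{ĩ,j̃}`, defined using an arbitrarily chosen
pair at two-way distance `h̃` (and `0` if there is no such pair). -/
noncomputable def p (G : Digraph V) (h i j : ℕ × ℕ) : ℕ :=
  if hh : ∃ xy : V × V, G.tdist xy.1 xy.2 = h then
    Nat.card (G.P i j hh.choose.1 hh.choose.2)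
  else 0

/-- A weakly distance-regular digraph: strongly connected, and
`|P_{ĩ,j̃}(x,y)|` depends only on `∂̃(x,y)`, `ĩ` and `j̃`. -/
def IsWDR (G : Digraph V) : Prop :=
  G.StronglyConnected ∧
    ∀ (i j : ℕ × ℕ) (x y : V), Nat.card (G.P i j x y) = G.p (G.tdist x y) i j

/-- Commutativity: `p^{h̃}_{ĩ,j̃} = p^{h̃}_{j̃,ĩ}` for all `h̃,ĩ,j̃ ∈ ∂̃(Γ)`. -/
def IsCommutative (G : Digraph V) : Prop :=
  ∀ h i j : ℕ × ℕ, h ∈ G.tdSet → i ∈ G.tdSet → j ∈ G.tdSet → G.p h i j = G.p h j i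

/-- `Γ` is an undirected graph, i.e. its arc set is symmetric. -/
def IsUndirected (G : Digraph V) : Prop :=
  ∀ x y : V, G.Adj x y → G.Adj y x

def IsSemicomplete (G : Digraph V) : Prop :=
  ∀ x y : V, x ≠ y → (G.Adj x y ∨ G.Adj y x)

/-- `Γ` is a complete (undirected) graph. -/
def IsCompleteDigraph (G : Digraph V) : Prop :=
  ∀ x y : V, x ≠ y → (G.Adj x y ∧ G.Adj y x)

/-- The underlying graph of a digraph. -/
def underlying (G : Digraph V) : SimpleGraph V where
  Adj x y := G.Adj x y ∨ G.Adj y x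
  symm := ⟨fun _ _ h => h.symm⟩
  loopless := ⟨fun x h => h.elim (G.loopless x) (G.loopless x)⟩

/-- The diameter: the maximum value of the distance function. -/
noncomputable def diameter (G : Digraph V) : ℕ :=
  sSup {n | ∃ x y : V, G.dist x y = n}

/-- The girth: the length of a shortest circuit. -/
noncomputable def girth (G : Digraph V) : ℕ :=
  sInf {n | 0 < n ∧ ∃ x : V, G.HasPath x x n}

/-- Number of out-neighbours `d⁺(x)`. -/
noncomputable def outDeg (G : Digraph V) (x : V) : ℕ := Nat.card {y | G.Adj x y}

/-- Number of in-neighbours `d⁻(x)`. -/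
noncomputable def inDeg (G : Digraph V) (x : V) : ℕ := Nat.card {y | G.Adj y x}

def IsIsomorphicTo (G : Digraph V) (G' : Digraph V') : Prop :=
  ∃ e : V ≃ V', ∀ x y : V, G.Adj x y ↔ G'.Adj (e x) (e y)

/-- The Cartesian product of two digraphs. -/
def box (G : Digraph V) (G' : Digraph V') : Digraph (V × V') where
  Adj x y := (x.1 = y.1 ∧ G'.Adj x.2 y.2) ∨ (G.Adj x.1 y.1 ∧ x.2 = y.2)
  loopless := fun v h => h.elim (fun h' => G'.loopless v.2 h'.2) (fun h' => G.loopless v.1 h'.1)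

/-- Two digraphs have the same intersection numbers. -/
def SameIntersectionNumbers (G : Digraph V) (G' : Digraph V') : Prop :=
  G.tdSet = G'.tdSet ∧
    ∀ h i j : ℕ × ℕ, h ∈ G.tdSet → i ∈ G.tdSet → j ∈ G.tdSet → G.p h i j = G'.p h i j

/-- Induced subdigraph on a set of vertices. -/
def induce (G : Digraph V) (s : Set V) : Digraph s where
  Adj x y := G.Adj x.1 y.1
  loopless := fun v h => G.loopless v.1 h

end Digraph

/-- The Cartesian product of a family of digraphs. -/
def piBox {ι : Type*} {W : ι → Type*} (G : ∀ i, Digraph (W i)) : Digraph (∀ i, W i) where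
  Adj x y := ∃ i, (G i).Adj (x i) (y i) ∧ ∀ j, j ≠ i → x j = y j
  loopless := by
    rintro v ⟨i, hi, -⟩
    exact (G i).loopless _ hi

/-- The Cayley digraph `Cay(A,S)` of an additive group (for `S ⊆ A ∖ {0}`). -/
def Cay (A : Type*) [AddGroup A] (S : Set A) : Digraph A where
  Adj x y := x ≠ y ∧ y - x ∈ S
  loopless := fun _ h => h.1 rfl

/-- The Cayley graph of an additive group with respect to a symmetric connection set. -/
def cayleyGraph (A : Type*) [AddGroup A] (S : Set A) : SimpleGraph A where
  Adj x y := x ≠ y ∧ (y - x ∈ S ∨ x - y ∈ S)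
  symm := ⟨fun _ _ h => ⟨h.1.symm, h.2.symm⟩⟩
  loopless := ⟨fun _ h => h.1 rfl⟩

/-- The Hamming graph `H(ι, S)`: vertices are tuples, adjacent iff they differ in
exactly one coordinate. -/
def hammingGraph (ι : Type*) (S : Type*) : SimpleGraph (ι → S) where
  Adj x y := ∃ i, x i ≠ y i ∧ ∀ j, j ≠ i → x j = y j
  symm := by
    constructor
    rintro x y ⟨i, h1, h2⟩
    exact ⟨i, h1.symm, fun j hj => (h2 j hj).symm⟩
  loopless := by
    constructor
    rintro x ⟨i, h1, -⟩
    exact h1 rfl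

/-- The folded `n`-cube: vertices are `(n-1)`-tuples over `ℤ₂`, adjacent iff they
differ in exactly one coordinate or in all `n-1` coordinates. -/
def foldedCube (n : ℕ) : SimpleGraph (Fin (n - 1) → ZMod 2) where
  Adj x y := (∃ i, x i ≠ y i ∧ ∀ j, j ≠ i → x j = y j) ∨ (x ≠ y ∧ ∀ j, x j ≠ y j)
  symm := by
    constructor
    rintro x y (⟨i, h1, h2⟩ | ⟨h1, h2⟩)
    · exact Or.inl ⟨i, h1.symm, fun j hj => (h2 j hj).symm⟩
    · exact Or.inr ⟨h1.symm, fun j => (h2 j).symm⟩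
  loopless := by
    constructor
    rintro x (⟨i, h1, -⟩ | ⟨h1, -⟩)
    · exact h1 rfl
    · exact h1 rfl

/-- The Cartesian product of a family of simple graphs. -/
def piBoxGraph {ι : Type*} {W : ι → Type*} (G : ∀ i, SimpleGraph (W i)) :
    SimpleGraph (∀ i, W i) where
  Adj x y := ∃ i, (G i).Adj (x i) (y i) ∧ ∀ j, j ≠ i → x j = y j
  symm := by
    constructor
    rintro x y ⟨i, h1, h2⟩
    exact ⟨i, (G i).symm.symm _ _ h1, fun j hj => (h2 j hj).symm⟩
  loopless := by
    constructor
    rintro x ⟨i, h1, -⟩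
    exact (G i).loopless.irrefl _ h1

/-- The Shrikhande graph `Cay(ℤ₄ × ℤ₄, {±(1,0), ±(0,1), ±(1,1)})`. -/
def shrikhande : SimpleGraph (ZMod 4 × ZMod 4) :=
  cayleyGraph (ZMod 4 × ZMod 4) {(1, 0), (-1, 0), (0, 1), (0, -1), (1, 1), (-1, -1)}

/-- The Doob graph `G(d₁, d₂)`: the Cartesian product of `d₁` copies of the
Shrikhande graph with the Hamming graph `H(d₂, 4)`. -/
def doobGraph (d₁ d₂ : ℕ) :
    SimpleGraph ((Fin d₁ → ZMod 4 × ZMod 4) × (Fin d₂ → ZMod 4)) :=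
  (piBoxGraph fun _ : Fin d₁ => shrikhande).boxProd (hammingGraph (Fin d₂) (ZMod 4))

/-- `c_i(x,y)`: the number of neighbours of `y` at distance `i - 1` from `x`. -/
noncomputable def cNum (G : SimpleGraph V) (i : ℕ) (x y : V) : ℕ :=
  Nat.card {z : V | G.Adj y z ∧ G.dist x z = i - 1}

/-- `a_i(x,y)`: the number of neighbours of `y` at distance `i` from `x`. -/
noncomputable def aNum (G : SimpleGraph V) (i : ℕ) (x y : V) : ℕ :=
  Nat.card {z : V | G.Adj y z ∧ G.dist x z = i}

/-- `b_i(x,y)`: the number of neighbours of `y` at distance `i + 1` from `x`. -/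
noncomputable def bNum (G : SimpleGraph V) (i : ℕ) (x y : V) : ℕ :=
  Nat.card {z : V | G.Adj y z ∧ G.dist x z = i + 1}

/-- A distance-regular graph. -/
def IsDRG (G : SimpleGraph V) : Prop :=
  G.Connected ∧
    ∀ (i : ℕ) (x y x' y' : V), G.dist x y = i → G.dist x' y' = i →
      cNum G i x y = cNum G i x' y' ∧ bNum G i x y = bNum G i x' y'

/-- A distance-transitive graph. -/
def IsDistanceTransitive (G : SimpleGraph V) : Prop :=
  G.Connected ∧
    ∀ x y x' y' : V, G.dist x y = G.dist x' y' → ∃ σ : G ≃g G, σ x = x' ∧ σ y = y'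

/-- The vertex set of `Γ_i(α)`: all tuples obtained from `α` by inserting an
arbitrary element of `S` in the `i`-th coordinate. -/
def lineSet {n : ℕ} {S : Type*} (i : Fin (n + 1)) (α : Fin n → S) : Set (Fin (n + 1) → S) :=
  Set.range fun b : S => i.insertNth b α

/-- The induced subdigraph `Γ_i(α)`. -/
def Digraph.line {n : ℕ} {S : Type*} (Γ : Digraph (Fin (n + 1) → S)) (i : Fin (n + 1))
    (α : Fin n → S) : Digraph (lineSet i α) :=
  Γ.induce (lineSet i α)

/-- Pad a tuple of length `m` with the entry `o` to a tuple of length `d`. -/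
def pad {S : Type*} (o : S) (d m : ℕ) (α : Fin m → S) : Fin d → S :=
  fun j => if h : j.1 < m then α ⟨j.1, h⟩ else o

/-- The digraph `Γ^{[m]}` on `S^m`: `(α,β)` is an arc iff the padded tuples form
an arc of `Γ`. -/
def Digraph.trunc {S : Type*} {d : ℕ} (Γ : Digraph (Fin d → S)) (o : S) (m : ℕ) :
    Digraph (Fin m → S) where
  Adj α β := Γ.Adj (pad o d m α) (pad o d m β)
  loopless := fun _ h => Γ.loopless _ h

/-- The digraph `Γ^i` on `S`: `(a,b)` is an arc iff the tuples with `a` resp. `b`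
in the `i`-th coordinate and `o` elsewhere form an arc of `Γ`. -/
def Digraph.coordDigraph {S : Type*} {d : ℕ} (Γ : Digraph (Fin d → S)) (o : S) (i : Fin d) :
    Digraph S where
  Adj a b := Γ.Adj (Function.update (fun _ => o) i a) (Function.update (fun _ => o) i b)
  loopless := fun _ h => Γ.loopless _ h

/-- The set `T = S^{m-1} × {(o,…,o)}` (as a subset of `S^{d-1}`, here `d = n+1`). -/
def Tset {n : ℕ} (S : Type*) (o : S) (m : ℕ) : Set (Fin n → S) :=
  {α | ∀ j : Fin n, m - 1 ≤ j.1 → α j = o}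

end Paper

/-!
Suppose `z ∈ P_{(1,p-1),(p-1,1)}(x,y)` with `∂̃(x,y) = (1,s-1)`. Then
`x ∈ P_{(s-1,1),(1,p-1)}(y,z)`, and since `∂̃(y,z) = ∂̃(x,z)`, weak distance-regularity yields
`v ∈ P_{(s-1,1),(1,p-1)}(x,z)`; commutativity then yields `u ∈ P_{(1,p-1),(s-1,1)}(x,z)`.
As `s - 1 ≠ 1`, the vertices `y`, `v`, `u` are three distinct common neighbours of the edge
`xz` of the underlying graph, contradicting `a₁ = 2`.
-/

namespace Paper

variable {V : Type*}

namespace Digraph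

variable {G : Digraph V} {x y : V}

lemma tdist_swap : G.tdist y x = (G.tdist x y).swap := rfl

lemma tdist_eq_iff {a b : ℕ} : G.tdist x y = (a, b) ↔ G.dist x y = a ∧ G.dist y x = b :=
  Prod.ext_iff

lemma underlying_adj_of_dist_eq_one (h : G.dist x y = 1) : G.underlying.Adj x y := by
  have hpath : G.HasPath x y 1 := h ▸ Nat.sInf_mem (Nat.nonempty_of_sInf_eq_succ h)
  obtain ⟨f, rfl, rfl, hf⟩ := hpath
  exact Or.inl (hf 0 one_pos)

namespace IsWDR

variable [Finite V] (hG : G.IsWDR) {i j : ℕ × ℕ}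
include hG

lemma P_nonempty_iff : (G.P i j x y).Nonempty ↔ 0 < G.p (G.tdist x y) i j := by
  rw [← hG.2, Nat.card_pos_iff, Set.nonempty_coe_sort]
  exact ⟨fun h => ⟨h, Set.toFinite _⟩, And.left⟩

lemma P_nonempty_of_tdist_eq {x' y' : V} (h : G.tdist x y = G.tdist x' y')
    (hne : (G.P i j x y).Nonempty) : (G.P i j x' y').Nonempty := by
  rw [hG.P_nonempty_iff, ← h]
  exact hG.P_nonempty_iff.1 hne

lemma P_nonempty_swap (hc : G.IsCommutative) (hne : (G.P i j x y).Nonempty) :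
    (G.P j i x y).Nonempty := by
  obtain ⟨z, hxz, hzy⟩ := hne
  rw [hG.P_nonempty_iff, ← hc _ _ _ ⟨x, y, rfl⟩ ⟨x, z, hxz⟩ ⟨z, y, hzy⟩, ← hG.P_nonempty_iff]
  exact ⟨z, hxz, hzy⟩

end IsWDR

end Digraph

lemma two_lt_aNum_one [Finite V] {G : SimpleGraph V} {x z a b c : V}
    (hab : a ≠ b) (hac : a ≠ c) (hbc : b ≠ c)
    (ha : G.Adj x a ∧ G.Adj z a) (hb : G.Adj x b ∧ G.Adj z b) (hc : G.Adj x c ∧ G.Adj z c) :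
    2 < aNum G 1 x z := by
  rw [aNum, Nat.card_coe_set_eq, Set.two_lt_ncard (Set.toFinite _)]
  simp only [Set.mem_ofPred_eq, SimpleGraph.dist_eq_one_iff_adj]
  exact ⟨a, ha.symm, b, hb.symm, c, hc.symm, hab, hac, hbc⟩

end Paper

open Paper in
theorem lemma_zero_general {V : Type*} [Finite V] (Γ : Paper.Digraph V)
    (hwdr : Γ.IsWDR) (hcomm : Γ.IsCommutative)
    (ha1 : ∀ x y : V, Γ.underlying.dist x y = 1 → aNum Γ.underlying 1 x y = 2)
    (p s : ℕ) (hs2 : 2 < s)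
    (hs : ((1 : ℕ), s - 1) ∈ Γ.tdSet) :
    Γ.p (1, s - 1) (1, p - 1) (p - 1, 1) = 0 := by
  obtain ⟨x, y, hxy⟩ := hs
  rw [← hxy, ← Nat.le_zero, ← not_lt, ← hwdr.P_nonempty_iff]
  rintro ⟨z, hxz, hzy⟩
  have hyz : Γ.tdist y z = Γ.tdist x z := by rw [Digraph.tdist_swap, hzy, hxz]; rfl
  have hx : x ∈ Γ.P (s - 1, 1) (1, p - 1) y z := ⟨by rw [Digraph.tdist_swap, hxy]; rfl, hxz⟩
  obtain ⟨v, hxv, hvz⟩ := hwdr.P_nonempty_of_tdist_eq hyz ⟨x, hx⟩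
  obtain ⟨u, hxu, huz⟩ := hwdr.P_nonempty_swap hcomm ⟨v, hxv, hvz⟩
  simp only [Digraph.tdist_eq_iff] at hxy hxz hzy hxv hvz hxu huz
  have hyv : y ≠ v := by rintro rfl; omega
  have hyu : y ≠ u := by rintro rfl; omega
  have hvu : v ≠ u := by rintro rfl; omega
  have adj {a b : V} (h : Γ.dist a b = 1) : Γ.underlying.Adj a b :=
    Digraph.underlying_adj_of_dist_eq_one h
  have h3 := two_lt_aNum_one hyv hyu hvu ⟨adj hxy.1, (adj hzy.2).symm⟩
    ⟨(adj hxv.2).symm, (adj hvz.1).symm⟩ ⟨adj hxu.1, adj huz.2⟩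
  exact absurd (ha1 x z (SimpleGraph.dist_eq_one_iff_adj.2 (adj hxz.1))) h3.ne'

open Paper in
/-- **Lemma 3.3.** Suppose `a₁ = 2`. If `s > 2`, then
`p^{(1,s−1)}_{(1,p−1),(p−1,1)} = 0`. -/
theorem lemma_zero {V : Type*} [Finite V] [Nonempty V] (Γ : Paper.Digraph V)
    (hwdr : Γ.IsWDR) (hcomm : Γ.IsCommutative)
    (hdrg : IsDRG Γ.underlying)
    (ha1 : ∀ x y : V, Γ.underlying.dist x y = 1 → aNum Γ.underlying 1 x y = 2)
    (p s : ℕ) (hs2 : 2 < s)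
    (hs : ((1 : ℕ), s - 1) ∈ Γ.tdSet) (hp : ((1 : ℕ), p - 1) ∈ Γ.tdSet) :
    Γ.p (1, s - 1) (1, p - 1) (p - 1, 1) = 0 :=
  lemma_zero_general Γ hwdr hcomm ha1 p s hs2 hs
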